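/- For regularized logistic regression J(w, D) = (1/n) Σ_{i=1}^n log(1 + exp(-X_iᵀ w t_i)) + (λ/2)‖w‖₂² with covariates in [0,1]^d and labels in {-1,1}: if w₁ minimizes J(·, D) and w₂ minimizes J(·, D') for two datasets D, D' of size n differing in one sample, then ‖w₁ - w₂‖₁ ≤ 2d/(nλ). In other words, the L1-sensitivity of the trained weight vector is at most 2d/(nλ). -/

import Mathlib

open Finset

/-!
Both losses are `λ`-strongly convex (convex logistic part plus `λ/2 ‖w‖₂²`), so adding the two
minimality inequalities gives `λ ‖w₁ - w₂‖₂² ≤ g w₂ - g w₁` with `g = J(·, D) - J(·, D')`, which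
only involves the differing sample. Softplus is 1-Lipschitz and `|Xᵢⱼ|, |tᵢ| ≤ 1`, so this is at
most `(2/n) ‖w₁ - w₂‖₁`, and `‖v‖₁² ≤ d ‖v‖₂²` converts the estimate into the `L¹` bound.
-/

/-- Regularized logistic-regression loss
`J(w, D) = (1/n) Σᵢ log(1 + exp(-Xᵢᵀ w tᵢ)) + (λ/2)‖w‖₂²`. -/
noncomputable def logRegLoss {n d : ℕ} (lam : ℝ) (X : Fin n → Fin d → ℝ)
    (t : Fin n → ℝ) (w : Fin d → ℝ) : ℝ :=
  (1 / n) * ∑ i, Real.log (1 + Real.exp (-(∑ j, X i j * w j) * t i)) +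
    lam / 2 * ∑ j, (w j) ^ 2

section UniformConvex

variable {E : Type*} [NormedAddCommGroup E] [NormedSpace ℝ E] {s : Set E} {x₀ x y : E}

open Filter Topology in
lemma UniformConvexOn.le_sub_of_isMinOn {φ : ℝ → ℝ} {f : E → ℝ} (hf : UniformConvexOn s φ f)
    (hmin : IsMinOn f s x₀) (hx₀ : x₀ ∈ s) (hx : x ∈ s) : φ ‖x - x₀‖ ≤ f x - f x₀ := by
  -- Compare `f x₀` with `f` at `a • x + (1 - a) • x₀` and let `a → 0⁺`.
  have hsegment : ∀ a ∈ Set.Ioo (0 : ℝ) 1, (1 - a) * φ ‖x - x₀‖ ≤ f x - f x₀ := by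
    rintro a ⟨ha₀, ha₁⟩
    have hb : 0 ≤ 1 - a := sub_nonneg.2 ha₁.le
    have hab : a + (1 - a) = 1 := add_sub_cancel a 1
    have hmin_a := isMinOn_iff.1 hmin _ (hf.1 hx hx₀ ha₀.le hb hab)
    have hconv := hf.2 hx hx₀ ha₀.le hb hab
    rw [smul_eq_mul, smul_eq_mul] at hconv
    refine le_of_mul_le_mul_left ?_ ha₀
    nlinarith
  have hlim : Tendsto (fun a : ℝ ↦ (1 - a) * φ ‖x - x₀‖) (𝓝[>] 0) (𝓝 (φ ‖x - x₀‖)) := by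
    have hcont : Continuous fun a : ℝ ↦ (1 - a) * φ ‖x - x₀‖ := by fun_prop
    simpa using (hcont.tendsto 0).mono_left nhdsWithin_le_nhds
  exact le_of_tendsto hlim (eventually_of_mem (Ioo_mem_nhdsGT one_pos) hsegment)

lemma StrongConvexOn.mul_norm_sub_sq_le_of_isMinOn {m : ℝ} {f g : E → ℝ}
    (hf : StrongConvexOn s m f) (hg : StrongConvexOn s m g) (hx : IsMinOn f s x)
    (hy : IsMinOn g s y) (hxs : x ∈ s) (hys : y ∈ s) :
    m * ‖x - y‖ ^ 2 ≤ (f y - g y) - (f x - g x) := by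
  have hfy := UniformConvexOn.le_sub_of_isMinOn hf hx hxs hys
  have hgx := UniformConvexOn.le_sub_of_isMinOn hg hy hys hxs
  rw [norm_sub_rev] at hfy
  linarith

end UniformConvex

noncomputable def softplus (x : ℝ) : ℝ := Real.log (1 + Real.exp x)

lemma hasDerivAt_softplus (x : ℝ) : HasDerivAt softplus (Real.sigmoid x) x := by
  have hpos : 0 < 1 + Real.exp x := by positivity
  convert ((Real.hasDerivAt_exp x).const_add 1).log hpos.ne' using 1
  · rfl
  rw [Real.sigmoid_def, Real.exp_neg]
  field_simp
  ring

lemma differentiable_softplus : Differentiable ℝ softplus :=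
  fun x ↦ (hasDerivAt_softplus x).differentiableAt

lemma deriv_softplus : deriv softplus = Real.sigmoid :=
  funext fun x ↦ (hasDerivAt_softplus x).deriv

lemma convexOn_softplus : ConvexOn ℝ Set.univ softplus :=
  (deriv_softplus ▸ Real.sigmoid_monotone).convexOn_univ_of_deriv differentiable_softplus

lemma lipschitzWith_softplus : LipschitzWith 1 softplus :=
  lipschitzWith_of_nnnorm_deriv_le differentiable_softplus fun x ↦ by
    rw [deriv_softplus, ← NNReal.coe_le_coe, coe_nnnorm, NNReal.coe_one,
      Real.norm_of_nonneg (Real.sigmoid_nonneg x)]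
    exact Real.sigmoid_le_one x

lemma convexOn_sum {𝕜 E β ι : Type*} [Semiring 𝕜] [PartialOrder 𝕜] [AddCommMonoid E]
    [AddCommMonoid β] [PartialOrder β] [IsOrderedAddMonoid β] [SMul 𝕜 E] [Module 𝕜 β]
    {s : Set E} (hs : Convex 𝕜 s) (t : Finset ι) {f : ι → E → β}
    (hf : ∀ i ∈ t, ConvexOn 𝕜 s (f i)) : ConvexOn 𝕜 s fun x ↦ ∑ i ∈ t, f i x := by
  classical
  induction t using Finset.induction_on with
  | empty => simpa using convexOn_const 0 hs
  | insert i t hi ih =>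
    simp_rw [sum_insert hi]
    exact (hf i (mem_insert_self i t)).add (ih fun j hj ↦ hf j (mem_insert_of_mem hj))

lemma le_div_of_mul_sq_le_mul {a b x : ℝ} (ha : 0 < a) (hb : 0 ≤ b) (hx : 0 ≤ x)
    (h : a * x ^ 2 ≤ b * x) : x ≤ b / a := by
  rcases hx.eq_or_lt with rfl | hx
  · positivity
  · rw [le_div_iff₀ ha]
    nlinarith

section LogisticRegression

variable {n d : ℕ}

lemma logRegLoss_eq (lam : ℝ) (X : Fin n → Fin d → ℝ) (t : Fin n → ℝ) (w : Fin d → ℝ) :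
    logRegLoss lam X t w =
      (1 / n) * ∑ i, softplus (-(∑ j, X i j * w j) * t i) + lam / 2 * ∑ j, (w j) ^ 2 :=
  rfl

lemma convexOn_softplus_margin (x : Fin d → ℝ) (s : ℝ) :
    ConvexOn ℝ Set.univ fun w : EuclideanSpace ℝ (Fin d) ↦ softplus (-(∑ j, x j * w j) * s) := by
  have hmargin : ∀ w : EuclideanSpace ℝ (Fin d),
      innerₛₗ ℝ (WithLp.toLp 2 (-s • x)) w = -(∑ j, x j * w j) * s := fun w ↦ by
    simp [PiLp.inner_apply, mul_comm]
  simpa only [Set.preimage_univ, Function.comp_def, hmargin] using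
    convexOn_softplus.comp_linearMap (innerₛₗ ℝ (WithLp.toLp 2 (-s • x)))

lemma strongConvexOn_logRegLoss (lam : ℝ) (X : Fin n → Fin d → ℝ) (t : Fin n → ℝ) :
    StrongConvexOn Set.univ lam fun w : EuclideanSpace ℝ (Fin d) ↦ logRegLoss lam X t w.ofLp := by
  rw [strongConvexOn_iff_convex]
  have hregularizer_cancels : (fun w : EuclideanSpace ℝ (Fin d) ↦
      logRegLoss lam X t w.ofLp - lam / 2 * ‖w‖ ^ 2) =
      fun w ↦ (1 / n : ℝ) • ∑ i, softplus (-(∑ j, X i j * w j) * t i) := by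
    funext w
    rw [logRegLoss_eq, EuclideanSpace.real_norm_sq_eq, smul_eq_mul, add_sub_cancel_right]
  rw [hregularizer_cancels]
  exact (convexOn_sum convex_univ univ fun i _ ↦ convexOn_softplus_margin (X i) (t i)).smul
    (by positivity)

lemma softplus_margin_sub_le {x : Fin d → ℝ} {s : ℝ} (hx : ∀ j, |x j| ≤ 1) (hs : |s| ≤ 1)
    (u v : Fin d → ℝ) :
    softplus (-(∑ j, x j * u j) * s) - softplus (-(∑ j, x j * v j) * s) ≤ ∑ j, |u j - v j| := by
  have hlip := lipschitzWith_softplus.dist_le_mul (-(∑ j, x j * u j) * s) (-(∑ j, x j * v j) * s)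
  rw [NNReal.coe_one, one_mul, Real.dist_eq, Real.dist_eq] at hlip
  calc _ ≤ |-(∑ j, x j * u j) * s - -(∑ j, x j * v j) * s| := (le_abs_self _).trans hlip
    _ = |∑ j, x j * (u j - v j)| * |s| := by
      rw [← abs_mul, ← abs_neg]
      simp only [mul_sub, sum_sub_distrib]
      ring_nf
    _ ≤ ∑ j, |x j * (u j - v j)| := mul_le_of_le_one_right (abs_nonneg _) hs |>.trans
      (abs_sum_le_sum_abs _ _)
    _ ≤ ∑ j, |u j - v j| := sum_le_sum fun j _ ↦ by
      rw [abs_mul]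
      exact mul_le_of_le_one_left (abs_nonneg _) (hx j)

lemma logRegLoss_sub_logRegLoss {lam : ℝ} {X X' : Fin n → Fin d → ℝ} {t t' : Fin n → ℝ}
    {i₀ : Fin n} (hdiff : ∀ i, i ≠ i₀ → X i = X' i ∧ t i = t' i) (w : Fin d → ℝ) :
    logRegLoss lam X t w - logRegLoss lam X' t' w =
      (1 / n) * (softplus (-(∑ j, X i₀ j * w j) * t i₀) -
        softplus (-(∑ j, X' i₀ j * w j) * t' i₀)) := by
  have hsum : ∑ i, softplus (-(∑ j, X i j * w j) * t i) -
      ∑ i, softplus (-(∑ j, X' i j * w j) * t' i) =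
      softplus (-(∑ j, X i₀ j * w j) * t i₀) - softplus (-(∑ j, X' i₀ j * w j) * t' i₀) := by
    rw [← sum_sub_distrib, sum_eq_single i₀ (fun i _ hi ↦ by rw [(hdiff i hi).1, (hdiff i hi).2,
      sub_self]) (fun h ↦ absurd (mem_univ i₀) h)]
  rw [logRegLoss_eq, logRegLoss_eq, ← hsum]
  ring

lemma logRegLoss_sub_logRegLoss_sub_le {lam : ℝ} {X X' : Fin n → Fin d → ℝ}
    {t t' : Fin n → ℝ} {i₀ : Fin n} (hX : ∀ j, |X i₀ j| ≤ 1) (hX' : ∀ j, |X' i₀ j| ≤ 1)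
    (ht : |t i₀| ≤ 1) (ht' : |t' i₀| ≤ 1) (hdiff : ∀ i, i ≠ i₀ → X i = X' i ∧ t i = t' i)
    (u v : Fin d → ℝ) :
    (logRegLoss lam X t v - logRegLoss lam X' t' v) -
        (logRegLoss lam X t u - logRegLoss lam X' t' u) ≤ 2 / n * ∑ j, |u j - v j| := by
  have h := softplus_margin_sub_le hX ht v u
  have h' := softplus_margin_sub_le hX' ht' u v
  rw [sum_congr rfl fun j _ ↦ abs_sub_comm (v j) (u j)] at h
  rw [logRegLoss_sub_logRegLoss hdiff, logRegLoss_sub_logRegLoss hdiff]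
  have hscaled := mul_le_mul_of_nonneg_left (add_le_add h h') (by positivity : (0 : ℝ) ≤ 1 / n)
  linear_combination hscaled

end LogisticRegression

theorem stmt7_general {n d : ℕ} (lam : ℝ) (hlam : 0 < lam)
    (X X' : Fin n → Fin d → ℝ) (t t' : Fin n → ℝ)
    (hX : ∀ i j, X i j ∈ Set.Icc (0 : ℝ) 1) (hX' : ∀ i j, X' i j ∈ Set.Icc (0 : ℝ) 1)
    (ht : ∀ i, t i = 1 ∨ t i = -1) (ht' : ∀ i, t' i = 1 ∨ t' i = -1)
    (i₀ : Fin n) (hdiff : ∀ i, i ≠ i₀ → X i = X' i ∧ t i = t' i)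
    (w₁ w₂ : Fin d → ℝ)
    (hmin₁ : ∀ w, logRegLoss lam X t w₁ ≤ logRegLoss lam X t w)
    (hmin₂ : ∀ w, logRegLoss lam X' t' w₂ ≤ logRegLoss lam X' t' w) :
    (∑ j, |w₁ j - w₂ j|) ≤ 2 * d / (n * lam) := by
  have habs_Icc : ∀ {a : ℝ}, a ∈ Set.Icc (0 : ℝ) 1 → |a| ≤ 1 := fun ha ↦
    abs_le.2 ⟨by linarith [ha.1], ha.2⟩
  have habs_sign : ∀ {a : ℝ}, a = 1 ∨ a = -1 → |a| ≤ 1 := by rintro a (rfl | rfl) <;> simp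
  have hstab := (strongConvexOn_logRegLoss lam X t).mul_norm_sub_sq_le_of_isMinOn
    (strongConvexOn_logRegLoss lam X' t') (x := WithLp.toLp 2 w₁) (y := WithLp.toLp 2 w₂)
    (isMinOn_univ_iff.2 fun w ↦ hmin₁ w.ofLp) (isMinOn_univ_iff.2 fun w ↦ hmin₂ w.ofLp)
    trivial trivial
  rw [← WithLp.toLp_sub, EuclideanSpace.real_norm_sq_eq] at hstab
  have hL2 : lam * ∑ j, (w₁ j - w₂ j) ^ 2 ≤ 2 / n * ∑ j, |w₁ j - w₂ j| :=
    hstab.trans (logRegLoss_sub_logRegLoss_sub_le (fun j ↦ habs_Icc (hX i₀ j))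
      (fun j ↦ habs_Icc (hX' i₀ j)) (habs_sign (ht i₀)) (habs_sign (ht' i₀)) hdiff w₁ w₂)
  have hL1 : (∑ j, |w₁ j - w₂ j|) ^ 2 ≤ d * ∑ j, (w₁ j - w₂ j) ^ 2 := by
    simpa using sq_sum_le_card_mul_sum_sq (s := univ) (f := fun j ↦ |w₁ j - w₂ j|)
  rw [← div_div]
  refine le_div_of_mul_sq_le_mul hlam (by positivity) (sum_nonneg fun j _ ↦ abs_nonneg _) ?_
  calc lam * (∑ j, |w₁ j - w₂ j|) ^ 2 ≤ lam * (d * ∑ j, (w₁ j - w₂ j) ^ 2) :=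
        mul_le_mul_of_nonneg_left hL1 hlam.le
    _ = d * (lam * ∑ j, (w₁ j - w₂ j) ^ 2) := by ring
    _ ≤ d * (2 / n * ∑ j, |w₁ j - w₂ j|) := mul_le_mul_of_nonneg_left hL2 d.cast_nonneg
    _ = 2 * d / n * ∑ j, |w₁ j - w₂ j| := by ring

/-- L1-sensitivity of regularized logistic regression: if `w₁` minimizes
`J(·, D)` and `w₂` minimizes `J(·, D')` for datasets differing in one sample
(covariates in `[0,1]^d`, labels `±1`), then `‖w₁ - w₂‖₁ ≤ 2d/(nλ)`. -/
theorem stmt7 {n d : ℕ} (hn : 0 < n) (lam : ℝ) (hlam : 0 < lam)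
    (X X' : Fin n → Fin d → ℝ) (t t' : Fin n → ℝ)
    (hX : ∀ i j, X i j ∈ Set.Icc (0 : ℝ) 1) (hX' : ∀ i j, X' i j ∈ Set.Icc (0 : ℝ) 1)
    (ht : ∀ i, t i = 1 ∨ t i = -1) (ht' : ∀ i, t' i = 1 ∨ t' i = -1)
    (i₀ : Fin n) (hdiff : ∀ i, i ≠ i₀ → X i = X' i ∧ t i = t' i)
    (w₁ w₂ : Fin d → ℝ)
    (hmin₁ : ∀ w, logRegLoss lam X t w₁ ≤ logRegLoss lam X t w)
    (hmin₂ : ∀ w, logRegLoss lam X' t' w₂ ≤ logRegLoss lam X' t' w) :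
    (∑ j, |w₁ j - w₂ j|) ≤ 2 * d / (n * lam) :=
  stmt7_general lam hlam X X' t t' hX hX' ht ht' i₀ hdiff w₁ w₂ hmin₁ hmin₂
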